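/- Let p ∈ ℕ, λ ≥ 0, Σ̂ a p×p real symmetric positive semidefinite matrix, Σ̂_λ := Σ̂ + λ·I_p, β_λ, γ ∈ ℝ^p and t ≥ 0. Assume the condition ⟨Σ̂_λ((I_p + t·Σ̂_λ)^{-1} − exp(−t·Σ̂_λ))β_λ, γ − β_λ⟩ ≥ 0. Then the gradient-flow approximation error is bounded by the ridge approximation error: ‖Σ̂_λ^{1/2}(exp(−t·Σ̂_λ)β_λ + (γ − β_λ))‖² ≤ ‖Σ̂_λ^{1/2}((I_p + t·Σ̂_λ)^{-1}β_λ + (γ − β_λ))‖². -/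

import Mathlib

open Matrix

/-- Squared Euclidean norm on `Fin p → ℝ`. -/
noncomputable def sqnorm {p : ℕ} (v : Fin p → ℝ) : ℝ := ∑ i, (v i) ^ 2

/-- Euclidean inner product on `Fin p → ℝ`. -/
noncomputable def ip {p : ℕ} (v w : Fin p → ℝ) : ℝ := ∑ i, v i * w i

/-- The positive semidefinite square root, as `Matrix.PosSemidef.sqrt` was defined in Mathlib
(Dec 2024); it has since been removed from Mathlib. -/
noncomputable def Matrix.PosSemidef.sqrt {n : Type*} [Fintype n] [DecidableEq n]
    {A : Matrix n n ℝ} (hA : A.PosSemidef) : Matrix n n ℝ :=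
  hA.1.eigenvectorUnitary.1 * diagonal ((↑) ∘ (Real.sqrt ∘ hA.1.eigenvalues)) *
  (star hA.1.eigenvectorUnitary : Matrix n n ℝ)

/-!
With `a = exp (-t Σ) β`, `b = (1 + t Σ)⁻¹ β` and `g = γ - β`, both sides are `Σ`-quadratic forms:
`‖Σ^{1/2} (v + g)‖² = ⟨v, Σ v⟩ + 2 ⟨Σ v, g⟩ + ⟨g, Σ g⟩`. The cross terms compare by hypothesis.
The quadratic terms compare by functional calculus: `a` and `b` are `f (Σ) β` for
`f s = exp (-t s)` and `f s = (1 + t s)⁻¹`, so it suffices that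
`s exp (-t s) ^ 2 ≤ s (1 + t s)⁻²` on the spectrum `s ≥ 0`, i.e. `1 + t s ≤ exp (t s)`.
-/

lemma Real.exp_neg_le_inv_one_add {s : ℝ} (hs : -1 < s) : Real.exp (-s) ≤ (1 + s)⁻¹ := by
  rw [Real.exp_neg]
  exact inv_anti₀ (by linarith) (by linarith [Real.add_one_le_exp s])

lemma sqnorm_eq_dotProduct {p : ℕ} (v : Fin p → ℝ) : sqnorm v = v ⬝ᵥ v := by
  simp only [sqnorm, dotProduct, sq]

open scoped MatrixOrder

namespace Matrix

variable {n : Type*} [Fintype n] {A : Matrix n n ℝ}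

lemma IsHermitian.mulVec_dotProduct (hA : A.IsHermitian) (x y : n → ℝ) :
    (A *ᵥ x) ⬝ᵥ y = x ⬝ᵥ (A *ᵥ y) := by
  rw [dotProduct_mulVec, ← mulVec_transpose, ← conjTranspose_eq_transpose_of_trivial, hA.eq]

lemma IsHermitian.add_dotProduct_mulVec_add (hA : A.IsHermitian) (x y : n → ℝ) :
    (x + y) ⬝ᵥ (A *ᵥ (x + y)) = x ⬝ᵥ (A *ᵥ x) + 2 * ((A *ᵥ x) ⬝ᵥ y) + y ⬝ᵥ (A *ᵥ y) := by
  have hxy : x ⬝ᵥ (A *ᵥ y) = (A *ᵥ x) ⬝ᵥ y := (hA.mulVec_dotProduct x y).symm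
  have hyx : y ⬝ᵥ (A *ᵥ x) = (A *ᵥ x) ⬝ᵥ y := dotProduct_comm _ _
  simp only [mulVec_add, add_dotProduct, dotProduct_add, hxy, hyx]
  ring

lemma dotProduct_mulVec_le_of_le {M N : Matrix n n ℝ} (hMN : M ≤ N) (x : n → ℝ) :
    x ⬝ᵥ (M *ᵥ x) ≤ x ⬝ᵥ (N *ᵥ x) := by
  have := (le_iff.mp hMN).dotProduct_mulVec_nonneg x
  rw [sub_mulVec, dotProduct_sub, star_trivial] at this
  linarith

variable [DecidableEq n]

lemma isHermitian_cfc (f : ℝ → ℝ) (A : Matrix n n ℝ) : (cfc f A).IsHermitian :=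
  cfc_predicate f A

lemma continuousOn_spectrum (f : ℝ → ℝ) (A : Matrix n n ℝ) : ContinuousOn f (spectrum ℝ A) :=
  A.finite_spectrum.continuousOn f

lemma IsHermitian.cfc_mulVec_dotProduct_mulVec_le (hA : A.IsHermitian) {f g : ℝ → ℝ}
    (hfg : ∀ s ∈ spectrum ℝ A, s * f s ^ 2 ≤ s * g s ^ 2) (x : n → ℝ) :
    (cfc f A *ᵥ x) ⬝ᵥ (A *ᵥ (cfc f A *ᵥ x)) ≤ (cfc g A *ᵥ x) ⬝ᵥ (A *ᵥ (cfc g A *ᵥ x)) := by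
  have hquad (h : ℝ → ℝ) :
      (cfc h A *ᵥ x) ⬝ᵥ (A *ᵥ (cfc h A *ᵥ x)) = x ⬝ᵥ (cfc (fun s => s * h s ^ 2) A *ᵥ x) := by
    have hprod : cfc (fun s => s * h s ^ 2) A = cfc h A * A * cfc h A := by
      rw [cfc_congr (g := fun s => h s * s * h s) fun s _ => by ring,
        cfc_mul _ _ A (continuousOn_spectrum _ A) (continuousOn_spectrum _ A),
        cfc_mul _ _ A (continuousOn_spectrum _ A) (continuousOn_spectrum _ A),
        cfc_id' ℝ A hA.isSelfAdjoint]
    rw [(isHermitian_cfc h A).mulVec_dotProduct, hprod, mulVec_mulVec, mulVec_mulVec]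
  rw [hquad, hquad]
  exact dotProduct_mulVec_le_of_le
    (cfc_mono hfg (continuousOn_spectrum _ A) (continuousOn_spectrum _ A)) x

lemma PosSemidef.sqrt_eq_cfc (hA : A.PosSemidef) : hA.sqrt = cfc Real.sqrt A := by
  rw [hA.1.cfc_eq, IsHermitian.cfc, Unitary.conjStarAlgAut_apply]
  rfl

lemma PosSemidef.spectrum_nonneg (hA : A.PosSemidef) : ∀ s ∈ spectrum ℝ A, 0 ≤ s :=
  fun _ hs => spectrum_nonneg_of_nonneg (nonneg_iff_posSemidef.mpr hA) hs

lemma PosSemidef.sqrt_mulVec_dotProduct_self (hA : A.PosSemidef) (x : n → ℝ) :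
    (hA.sqrt *ᵥ x) ⬝ᵥ (hA.sqrt *ᵥ x) = x ⬝ᵥ (A *ᵥ x) := by
  have hsq : cfc Real.sqrt A * cfc Real.sqrt A = A := by
    rw [← cfc_mul ..]
    exact (cfc_congr fun s hs => Real.mul_self_sqrt (hA.spectrum_nonneg s hs)).trans
      (cfc_id' ℝ A hA.isHermitian.isSelfAdjoint)
  rw [hA.sqrt_eq_cfc, (isHermitian_cfc _ A).mulVec_dotProduct, mulVec_mulVec, hsq]

-- `NormedSpace.exp` depends only on the topology, so any algebra norm may be used to identify
-- it with `cfc Real.exp`.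
open scoped Matrix.Norms.L2Operator in
lemma IsHermitian.exp_neg_smul_eq_cfc (hA : A.IsHermitian) (t : ℝ) :
    NormedSpace.exp (-(t • A)) = cfc (fun s => Real.exp (-(t * s))) A := by
  have hlin : -(t • A) = cfc (fun s => -(t * s)) A := by
    rw [cfc_neg (fun s => t * s) A, cfc_const_mul_id t A hA.isSelfAdjoint]
  rw [hlin, ← CFC.real_exp_eq_normedSpace_exp (isHermitian_cfc _ A).isSelfAdjoint,
    ← cfc_comp' _ _ A Real.continuous_exp.continuousOn (continuousOn_spectrum _ A) hA.isSelfAdjoint]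

lemma PosSemidef.inv_one_add_smul_eq_cfc (hA : A.PosSemidef) {t : ℝ} (ht : 0 ≤ t) :
    (1 + t • A)⁻¹ = cfc (fun s => (1 + t * s)⁻¹) A := by
  have hlin : 1 + t • A = cfc (fun s => 1 + t * s) A := by
    rw [cfc_const_add 1 (fun s => t * s) A, cfc_const_mul_id t A hA.isHermitian.isSelfAdjoint,
      map_one]
  have hpos : ∀ s ∈ spectrum ℝ A, 1 + t * s ≠ 0 := fun s hs => by
    have := hA.spectrum_nonneg s hs
    positivity
  rw [hlin, nonsing_inv_eq_ringInverse,
    ← cfc_inv _ A hpos (continuousOn_spectrum _ A) hA.isHermitian.isSelfAdjoint]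

lemma PosSemidef.exp_neg_smul_mulVec_dotProduct_mulVec_le (hA : A.PosSemidef) {t : ℝ} (ht : 0 ≤ t)
    (x : n → ℝ) :
    (NormedSpace.exp (-(t • A)) *ᵥ x) ⬝ᵥ (A *ᵥ (NormedSpace.exp (-(t • A)) *ᵥ x)) ≤
      ((1 + t • A)⁻¹ *ᵥ x) ⬝ᵥ (A *ᵥ ((1 + t • A)⁻¹ *ᵥ x)) := by
  rw [hA.isHermitian.exp_neg_smul_eq_cfc, hA.inv_one_add_smul_eq_cfc ht]
  refine hA.isHermitian.cfc_mulVec_dotProduct_mulVec_le (fun s hs => ?_) x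
  have hs0 := hA.spectrum_nonneg s hs
  have hts : -1 < t * s := by nlinarith
  gcongr
  exact Real.exp_neg_le_inv_one_add hts

end Matrix

theorem gf_ridge_approximation_comparison_general
    (p : ℕ)
    (Sigl : Matrix (Fin p) (Fin p) ℝ)
    (hSigl : Sigl.PosSemidef)
    (betal gam : Fin p → ℝ) (t : ℝ) (ht : 0 ≤ t)
    (hcond : 0 ≤ ip (Sigl *ᵥ (((1 + t • Sigl)⁻¹ - NormedSpace.exp (-(t • Sigl))) *ᵥ betal))
        (gam - betal)) :
    sqnorm (hSigl.sqrt *ᵥ (NormedSpace.exp (-(t • Sigl)) *ᵥ betal + (gam - betal))) ≤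
      sqnorm (hSigl.sqrt *ᵥ ((1 + t • Sigl)⁻¹ *ᵥ betal + (gam - betal))) := by
  have hcross : (Sigl *ᵥ (NormedSpace.exp (-(t • Sigl)) *ᵥ betal)) ⬝ᵥ (gam - betal) ≤
      (Sigl *ᵥ ((1 + t • Sigl)⁻¹ *ᵥ betal)) ⬝ᵥ (gam - betal) := by
    have h : 0 ≤ (Sigl *ᵥ (((1 + t • Sigl)⁻¹ - NormedSpace.exp (-(t • Sigl))) *ᵥ betal)) ⬝ᵥ
        (gam - betal) := hcond
    rw [sub_mulVec, mulVec_sub, sub_dotProduct] at h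
    linarith
  have hquad := hSigl.exp_neg_smul_mulVec_dotProduct_mulVec_le ht betal
  simp only [sqnorm_eq_dotProduct, hSigl.sqrt_mulVec_dotProduct_self,
    hSigl.isHermitian.add_dotProduct_mulVec_add]
  linarith

/-- under the compatibility condition on the target vector `γ`, the gradient-flow
approximation error is bounded by the ridge approximation error. -/
theorem gf_ridge_approximation_comparison
    (p : ℕ) (lam : ℝ) (hlam : 0 ≤ lam)
    (Sig : Matrix (Fin p) (Fin p) ℝ) (hSig : Sig.PosSemidef)
    (Sigl : Matrix (Fin p) (Fin p) ℝ) (hSigl_def : Sigl = Sig + lam • 1)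
    (hSigl : Sigl.PosSemidef)
    (betal gam : Fin p → ℝ) (t : ℝ) (ht : 0 ≤ t)
    (hcond : 0 ≤ ip (Sigl *ᵥ (((1 + t • Sigl)⁻¹ - NormedSpace.exp (-(t • Sigl))) *ᵥ betal))
        (gam - betal)) :
    sqnorm (hSigl.sqrt *ᵥ (NormedSpace.exp (-(t • Sigl)) *ᵥ betal + (gam - betal))) ≤
      sqnorm (hSigl.sqrt *ᵥ ((1 + t • Sigl)⁻¹ *ᵥ betal + (gam - betal))) :=
  gf_ridge_approximation_comparison_general p Sigl hSigl betal gam t ht hcond
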